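/- Let (P,λ) be a marked poset with λ(P*) = {c_0 < c_1 < ⋯ < c_k}, c_0 = 0, and let ω_1 be the indicator of the filter λ^{-1}([c_1,∞)). For any 0 < ε ≤ c_1 and any x ∈ O(P,λ), the points y and z defined by y_p = min{x_p, ε} and z_p = max{0, x_p − ε} (for all p ∈ P) satisfy y ∈ O(P, ε·ω_1), z ∈ O(P, λ − ε·ω_1), and x = y + z. -/

import Mathlib

/-!
Every marking value of `λ` is either `c₀ = 0` or at least `c₁ ≥ ε`. Hence the two monotone
truncations `t ↦ min t ε` and `t ↦ max 0 (t - ε)` send the marking `λ` to `ε·ω₁` and `λ - ε·ω₁`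
respectively, and applying a monotone map coordinatewise preserves order-preservation. Their sum
is the identity.
-/

/-- The marked order polyhedron `O(P,λ) ⊆ ℝ^P`. -/
def MO {P : Type*} [PartialOrder P] (Pstar : Set P) (lam : P → ℝ) : Set (P → ℝ) :=
  {x | (∀ a ∈ Pstar, x a = lam a) ∧ ∀ p q : P, p ≤ q → x p ≤ x q}

theorem comp_mem_MO_of_monotone {P : Type*} [PartialOrder P] {Pstar : Set P} {lam μ : P → ℝ}
    {f : ℝ → ℝ} (hf : Monotone f) (hμ : ∀ a ∈ Pstar, f (lam a) = μ a) {x : P → ℝ}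
    (hx : x ∈ MO Pstar lam) : f ∘ x ∈ MO Pstar μ :=
  ⟨fun a ha => (congrArg f (hx.1 a ha)).trans (hμ a ha), fun p q hpq => hf (hx.2 p q hpq)⟩

theorem eq_or_apply_one_le_of_mem_image_Iic {α : Type*} [Preorder α] {c : ℕ → α} {k : ℕ}
    (hc : ∀ i < k, c i < c (i + 1)) {v : α} (hv : v ∈ c '' Set.Iic k) : v = c 0 ∨ c 1 ≤ v := by
  obtain ⟨i, hik, rfl⟩ := hv
  rcases Nat.eq_zero_or_pos i with rfl | hi
  · exact .inl rfl
  · exact .inr <| (strictMonoOn_Iic_of_lt_succ hc).monotoneOn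
      (Set.mem_Iic.2 (hi.trans_le hik)) hik hi

section Truncation

variable {v ε c₁ : ℝ}

theorem min_add_max_zero_sub (a ε : ℝ) : min a ε + max 0 (a - ε) = a := by
  rw [← sub_self ε, max_sub_sub_right, max_comm, ← add_sub_assoc, min_add_max, add_sub_cancel_right]

theorem min_eq_mul_ite (hε : 0 < ε) (hεc : ε ≤ c₁) (hv : v = 0 ∨ c₁ ≤ v) :
    min v ε = ε * if c₁ ≤ v then 1 else 0 := by
  rcases hv with rfl | hv
  · rw [if_neg (by linarith), mul_zero, min_eq_left hε.le]
  · rw [if_pos hv, mul_one, min_eq_right (hεc.trans hv)]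

theorem max_zero_sub_eq_sub_mul_ite (hε : 0 < ε) (hεc : ε ≤ c₁) (hv : v = 0 ∨ c₁ ≤ v) :
    max 0 (v - ε) = v - ε * if c₁ ≤ v then 1 else 0 := by
  rw [← min_eq_mul_ite hε hεc hv]
  exact eq_sub_of_add_eq' (min_add_max_zero_sub v ε)

end Truncation

theorem mo_min_max_decomposition_general {P : Type*} [PartialOrder P]
    (Pstar : Set P) (lam : P → ℝ)
    (k : ℕ) (c : ℕ → ℝ) (hc : ∀ i < k, c i < c (i + 1))
    (him : lam '' Pstar = c '' Set.Iic k) (hc0 : c 0 = 0)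
    (ω1 : P → ℝ) (hω1 : ω1 = fun a => if c 1 ≤ lam a then 1 else 0)
    (ε : ℝ) (hε : 0 < ε) (hεc : ε ≤ c 1)
    (x : P → ℝ) (hx : x ∈ MO Pstar lam) :
    (fun p => min (x p) ε) ∈ MO Pstar (fun p => ε * ω1 p) ∧
    (fun p => max 0 (x p - ε)) ∈ MO Pstar (fun p => lam p - ε * ω1 p) ∧
    x = fun p => min (x p) ε + max 0 (x p - ε) := by
  subst hω1
  have hmarks : ∀ a ∈ Pstar, lam a = 0 ∨ c 1 ≤ lam a := fun a ha =>
    hc0 ▸ eq_or_apply_one_le_of_mem_image_Iic hc (him ▸ Set.mem_image_of_mem lam ha)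
  refine ⟨?_, ?_, funext fun p => (min_add_max_zero_sub (x p) ε).symm⟩
  · exact comp_mem_MO_of_monotone (fun _ _ h => min_le_min_right ε h)
      (fun a ha => min_eq_mul_ite hε hεc (hmarks a ha)) hx
  · exact comp_mem_MO_of_monotone (fun _ _ h => max_le_max_left 0 (sub_le_sub_right h ε))
      (fun a ha => max_zero_sub_eq_sub_mul_ite hε hεc (hmarks a ha)) hx

/-- with `λ(P*) = {c₀ < ⋯ < c_k}`, `c₀ = 0`, `ω₁` the indicator of the
filter `λ⁻¹([c₁,∞))` and `0 < ε ≤ c₁`, every `x ∈ O(P,λ)` decomposes as `x = y + z` with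
`y_p = min{x_p, ε} ∈ O(P, ε·ω₁)` and `z_p = max{0, x_p - ε} ∈ O(P, λ - ε·ω₁)`. -/
theorem mo_min_max_decomposition {P : Type*} [PartialOrder P] [Fintype P]
    (Pstar : Set P) (lam : P → ℝ)
    (hmin : ∀ p : P, IsMin p → p ∈ Pstar)
    (hlam : MonotoneOn lam Pstar)
    (k : ℕ) (hk : 1 ≤ k) (c : ℕ → ℝ) (hc : ∀ i < k, c i < c (i + 1))
    (him : lam '' Pstar = c '' Set.Iic k) (hc0 : c 0 = 0)
    (ω1 : P → ℝ) (hω1 : ω1 = fun a => if c 1 ≤ lam a then 1 else 0)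
    (ε : ℝ) (hε : 0 < ε) (hεc : ε ≤ c 1)
    (x : P → ℝ) (hx : x ∈ MO Pstar lam) :
    (fun p => min (x p) ε) ∈ MO Pstar (fun p => ε * ω1 p) ∧
    (fun p => max 0 (x p - ε)) ∈ MO Pstar (fun p => lam p - ε * ω1 p) ∧
    x = fun p => min (x p) ε + max 0 (x p - ε) :=
  mo_min_max_decomposition_general Pstar lam k c hc him hc0 ω1 hω1 ε hε hεc x hx
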